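/- Let R be a finite vertex set, let S ⊆ R with |S| ≥ 2, and let G be a set of edges of the complete graph on R. If the K_4-bootstrap closure (in the complete graph on R) of G ∪ E(K_S) equals E(K_R), where K_S is the complete graph on S, then the number of edges of G that do not have both endpoints in S is at least 2·(|R| − |S|). -/

import Mathlib

open Finset

/-- The edge set of the copy of `H` under the injection `f`. -/
def copyEdges {W V : Type*} (H : SimpleGraph W) (f : W ↪ V) : Set (Sym2 V) :=
  Sym2.map f '' H.edgeSet

/-- One step of the `H`-bootstrap process: infect every edge `e` for which some copy of `H`
contains `e` and has all its other edges already infected. -/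
def bootStep {W V : Type*} (H : SimpleGraph W) (E : Set (Sym2 V)) : Set (Sym2 V) :=
  E ∪ {e | ∃ f : W ↪ V, e ∈ copyEdges H f ∧ copyEdges H f ⊆ insert e E}

/-- The closure of `E` under the `H`-bootstrap process. -/
def bootClosure {W V : Type*} (H : SimpleGraph W) (E : Set (Sym2 V)) : Set (Sym2 V) :=
  ⋃ t, (bootStep H)^[t] E

/-- `E` percolates in the `H`-bootstrap process on the complete graph on `V`. -/
def Percolates {W V : Type*} (H : SimpleGraph W) (E : Set (Sym2 V)) : Prop :=
  bootClosure H E = (⊤ : SimpleGraph V).edgeSet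

/-- The expectation of `X` under the Erdős–Rényi random graph `G_{n,p}`,
written as a sum over all graphs on `[n]`, weighted by their probabilities. -/
noncomputable def gnpExp (n : ℕ) (p : ℝ) (X : Finset (Sym2 (Fin n)) → ℝ) : ℝ :=
  ∑ E ∈ (⊤ : SimpleGraph (Fin n)).edgeFinset.powerset,
    p ^ E.card * (1 - p) ^ ((⊤ : SimpleGraph (Fin n)).edgeFinset.card - E.card) * X E

/- probability of event `A` under `G_{n,p}` -/
open Classical in
noncomputable def gnpProb (n : ℕ) (p : ℝ) (A : Finset (Sym2 (Fin n)) → Prop) : ℝ :=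
  gnpExp n p (fun E => if A E then 1 else 0)

/-- The critical probability for `H`-bootstrap percolation on `K_n`. -/
noncomputable def pc {W : Type*} (n : ℕ) (H : SimpleGraph W) : ℝ :=
  sInf {p : ℝ | p ∈ Set.Icc (0 : ℝ) 1 ∧
    1 / 2 ≤ gnpProb n p (fun E => Percolates H (↑E : Set (Sym2 (Fin n))))}

/-- `λ(r) = (C(r,2) - 2)/(r - 2)`. -/
noncomputable def lam (r : ℕ) : ℝ := ((r.choose 2 : ℝ) - 2) / ((r : ℝ) - 2)

/-!
Place the vertices at distinct points `(t, t²)` of a parabola and look at the rows of the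
planar rigidity matrix. Four points of a parabola have an affine dependence with all
coefficients nonzero, which yields a self-stress of `K₄` with nonzero weights; hence the row of
an edge added by a `K₄`-step lies in the span of the rows already present, and every row of the
closure lies in the span of the rows of `G ∪ E(K_S)`. Now restrict the rows to the coordinates
of the vertices outside `S`. Edges inside `S` restrict to `0`, while for each `u ∉ S` the edges
from `u` to two fixed vertices `a, b ∈ S` restrict to `u`-supported vectors pointing from `a`
and from `b` to `u`, which are independent since no three points of a parabola are collinear. So the
restricted rows of the edges of `G` leaving `S` span a space of dimension `2 (|R| - |S|)`.
-/

namespace K4Bootstrap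

open Submodule Function

lemma eq_top_of_forall_single_mem {K ι N : Type*} [Semiring K] [AddCommMonoid N] [Module K N]
    [Fintype ι] [DecidableEq ι] {W : Submodule K (ι → N)} (h : ∀ i z, Pi.single i z ∈ W) :
    W = ⊤ :=
  eq_top_iff'.2 fun x => LinearMap.sum_single_apply (fun _ => N) x ▸ sum_mem fun i _ => h i (x i)

lemma finrank_span_image_le_ncard {K M α : Type*} [DivisionRing K] [AddCommGroup M] [Module K M]
    {s : Set α} (hs : s.Finite) (g : α → M) : Module.finrank K (span K (g '' s)) ≤ s.ncard := by
  classical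
  calc Module.finrank K (span K (g '' s))
      = Module.finrank K (span K ((hs.toFinset.image g : Finset M) : Set M)) := by
        rw [Finset.coe_image, Set.Finite.coe_toFinset]
    _ ≤ (hs.toFinset.image g).card := finrank_span_finset_le_card _
    _ ≤ s.ncard := by rw [Set.ncard_eq_toFinset_card s hs]; exact Finset.card_image_le

section RigidityRow

variable {V M : Type*} [DecidableEq V] [AddCommGroup M]

noncomputable def rigidityRow (p : V → M) : Sym2 V → V → M :=
  Sym2.lift ⟨fun u v => Pi.single u (p u - p v) + Pi.single v (p v - p u),
    fun _ _ => add_comm _ _⟩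

@[simp] lemma rigidityRow_mk (p : V → M) (u v : V) :
    rigidityRow p s(u, v) = Pi.single u (p u - p v) + Pi.single v (p v - p u) := rfl

lemma sum_sum_smul_rigidityRow_eq_zero {K ι : Type*} [CommRing K] [Module K M] [Fintype ι]
    (p : V → M) (f : ι → V) (c : ι → K) (hc : ∑ i, c i = 0)
    (hcp : ∑ i, c i • p (f i) = 0) :
    ∑ i, ∑ j, (c i * c j) • rigidityRow p s(f i, f j) = 0 := by
  have half : ∀ i, ∑ j, (c i * c j) • (Pi.single (f i) (p (f i) - p (f j)) : V → M) = 0 := by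
    intro i
    have key : ∑ j, (c i * c j) • (p (f i) - p (f j)) =
        c i • ((∑ j, c j) • p (f i) - ∑ j, c j • p (f j)) := by
      simp only [smul_sub, Finset.sum_sub_distrib, Finset.smul_sum, Finset.sum_smul, mul_smul]
    rw [hc, hcp, zero_smul, sub_zero, smul_zero] at key
    have := congrArg (LinearMap.single K (fun _ : V => M) (f i)) key
    simpa only [map_sum, map_smul, map_zero, LinearMap.single_apply] using this
  simp_rw [rigidityRow_mk, smul_add, Finset.sum_add_distrib, half, Finset.sum_const_zero,
    zero_add]
  rw [Finset.sum_comm]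
  simp_rw [mul_comm (c _) (c _), half, Finset.sum_const_zero]

lemma rigidityRow_mem_span_of_stress {K ι : Type*} [Field K] [CharZero K] [Module K M]
    [Fintype ι] [DecidableEq ι] (p : V → M) (f : ι ↪ V) (c : ι → K) (hc0 : ∀ i, c i ≠ 0)
    (hc : ∑ i, c i = 0) (hcp : ∑ i, c i • p (f i) = 0) {E : Set (Sym2 V)} {i₀ j₀ : ι}
    (hij : i₀ ≠ j₀) (hE : ∀ i j, i ≠ j → s(f i, f j) = s(f i₀, f j₀) ∨ s(f i, f j) ∈ E) :
    rigidityRow p s(f i₀, f j₀) ∈ span K (rigidityRow p '' E) := by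
  set F : ι × ι → V → M := fun x => (c x.1 * c x.2) • rigidityRow p s(f x.1, f x.2)
  set T : Finset (ι × ι) := {(i₀, j₀), (j₀, i₀)}
  have hT : ∑ x ∈ T, F x = (2 * (c i₀ * c j₀)) • rigidityRow p s(f i₀, f j₀) := by
    rw [Finset.sum_pair (by simp [hij.symm])]
    simp only [F, Sym2.eq_swap, mul_comm (c j₀), two_mul, add_smul]
  have hTc : ∑ x ∈ Tᶜ, F x ∈ span K (rigidityRow p '' E) := by
    refine sum_mem fun ⟨i, j⟩ hx => ?_
    rcases eq_or_ne i j with rfl | hne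
    · simp [F]
    rcases hE i j hne with he | he
    · simp only [T, Finset.mem_compl, Finset.mem_insert, Finset.mem_singleton, Prod.mk.injEq]
        at hx
      simp only [Sym2.eq_iff, f.injective.eq_iff] at he
      tauto
    · exact smul_mem _ _ (subset_span ⟨_, he, rfl⟩)
  have hsum : ∑ x ∈ T, F x + ∑ x ∈ Tᶜ, F x = 0 := by
    rw [Finset.sum_add_sum_compl, Fintype.sum_prod_type]
    exact sum_sum_smul_rigidityRow_eq_zero p f c hc hcp
  have h2 : (2 * (c i₀ * c j₀)) ≠ 0 := by simp [hc0]
  rw [← (span K _).smul_mem_iff h2, ← hT, eq_neg_of_add_eq_zero_left hsum]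
  exact neg_mem hTc

end RigidityRow

section Parabola

variable {K : Type*} [Field K]

def parabola (t : K) : K × K := (t, t ^ 2)

/-- The weights `1 / ∏_{j ≠ i} (t i - t j)` (Lagrange nodal weights) annihilate `1`, `t` and
`t ^ 2`, polynomials of degree less than `3`. -/
lemma exists_parabola_stress (t : Fin 4 → K) (ht : Injective t) :
    ∃ c : Fin 4 → K, (∀ i, c i ≠ 0) ∧ ∑ i, c i = 0 ∧ ∑ i, c i • parabola (t i) = 0 := by
  have h01 := sub_ne_zero.2 (ht.ne (by decide : (0 : Fin 4) ≠ 1))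
  have h02 := sub_ne_zero.2 (ht.ne (by decide : (0 : Fin 4) ≠ 2))
  have h03 := sub_ne_zero.2 (ht.ne (by decide : (0 : Fin 4) ≠ 3))
  have h12 := sub_ne_zero.2 (ht.ne (by decide : (1 : Fin 4) ≠ 2))
  have h13 := sub_ne_zero.2 (ht.ne (by decide : (1 : Fin 4) ≠ 3))
  have h23 := sub_ne_zero.2 (ht.ne (by decide : (2 : Fin 4) ≠ 3))
  refine ⟨![((t 0 - t 1) * (t 0 - t 2) * (t 0 - t 3))⁻¹,
    -((t 0 - t 1) * (t 1 - t 2) * (t 1 - t 3))⁻¹, ((t 0 - t 2) * (t 1 - t 2) * (t 2 - t 3))⁻¹,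
    -((t 0 - t 3) * (t 1 - t 3) * (t 2 - t 3))⁻¹], ?_, ?_, ?_⟩
  · intro i
    fin_cases i <;> simp [*]
  · simp [Fin.sum_univ_four]
    field_simp
    ring
  · simp only [Fin.sum_univ_four, parabola]
    ext <;> simp <;> field_simp <;> ring

lemma span_parabola_sub_eq_top {a b c : K} (hab : a ≠ b) (hac : a ≠ c) (hbc : b ≠ c) :
    span K (Set.range ![parabola a - parabola b, parabola a - parabola c]) = ⊤ := by
  refine LinearIndependent.span_eq_top_of_card_eq_finrank' ?_ (by simp)
  refine LinearIndependent.pair_iff.2 fun r s hrs => ?_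
  have h1 : r * (a - b) + s * (a - c) = 0 := by simpa [parabola] using congrArg Prod.fst hrs
  have h2 : r * (a ^ 2 - b ^ 2) + s * (a ^ 2 - c ^ 2) = 0 := by
    simpa [parabola] using congrArg Prod.snd hrs
  have hs : s * ((a - c) * (b - c)) = 0 := by linear_combination (a + b) * h1 - h2
  have hs0 : s = 0 := by simpa [sub_ne_zero.2 hac, sub_ne_zero.2 hbc] using hs
  subst hs0
  exact ⟨by simpa [sub_ne_zero.2 hab] using h1, rfl⟩

end Parabola

section Bootstrap

variable {V K : Type*} [DecidableEq V] [Field K] [CharZero K] {t : V → K}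

lemma rigidityRow_mem_span_of_mem_bootStep (ht : Injective t) {E : Set (Sym2 V)} {e : Sym2 V}
    (he : e ∈ bootStep (SimpleGraph.completeGraph (Fin 4)) E) :
    rigidityRow (parabola ∘ t) e ∈ span K (rigidityRow (parabola ∘ t) '' E) := by
  rcases he with he | ⟨f, ⟨e', he', rfl⟩, hcopy⟩
  · exact subset_span ⟨e, he, rfl⟩
  induction e' using Sym2.ind with
  | _ i₀ j₀ =>
    obtain ⟨c, hc0, hc, hcp⟩ := exists_parabola_stress (t ∘ f) (ht.comp f.injective)
    refine rigidityRow_mem_span_of_stress _ f c hc0 hc hcp he' fun i j hij => ?_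
    simpa [Sym2.map_mk] using hcopy ⟨s(i, j), hij, Sym2.map_mk f i j⟩

lemma rigidityRow_mem_span_of_mem_bootClosure (ht : Injective t) {E : Set (Sym2 V)}
    {e : Sym2 V} (he : e ∈ bootClosure (SimpleGraph.completeGraph (Fin 4)) E) :
    rigidityRow (parabola ∘ t) e ∈ span K (rigidityRow (parabola ∘ t) '' E) := by
  obtain ⟨n, hn⟩ := Set.mem_iUnion.1 he
  clear he
  induction n generalizing e with
  | zero => exact subset_span ⟨e, hn, rfl⟩
  | succ n ih =>
    rw [iterate_succ_apply'] at hn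
    refine span_le.2 ?_ (rigidityRow_mem_span_of_mem_bootStep ht hn)
    rintro _ ⟨e', he', rfl⟩
    exact ih he'

end Bootstrap

section Restriction

variable {V M K : Type*} [DecidableEq V] [AddCommGroup M] [Semiring K] [Module K M] {T : Set V}

lemma funLeft_val_single_of_notMem {u : V} (hu : u ∉ T) (z : M) :
    LinearMap.funLeft K M (Subtype.val : T → V) (Pi.single u z) = 0 := by
  ext ⟨v, hv⟩ : 1
  simp [ne_of_mem_of_not_mem hv hu]

lemma funLeft_val_single_of_mem {u : V} (hu : u ∈ T) (z : M) :
    LinearMap.funLeft K M (Subtype.val : T → V) (Pi.single u z) = Pi.single ⟨u, hu⟩ z := by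
  ext ⟨v, hv⟩ : 1
  simp [Pi.single_apply, Subtype.ext_iff]

lemma funLeft_rigidityRow_of_notMem (p : V → M) {u v : V} (hu : u ∉ T) (hv : v ∉ T) :
    LinearMap.funLeft K M (Subtype.val : T → V) (rigidityRow p s(u, v)) = 0 := by
  rw [rigidityRow_mk, map_add, funLeft_val_single_of_notMem hu, funLeft_val_single_of_notMem hv,
    add_zero]

lemma funLeft_rigidityRow_of_mem_of_notMem (p : V → M) {u v : V} (hu : u ∈ T) (hv : v ∉ T) :
    LinearMap.funLeft K M (Subtype.val : T → V) (rigidityRow p s(u, v)) =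
      Pi.single ⟨u, hu⟩ (p u - p v) := by
  rw [rigidityRow_mk, map_add, funLeft_val_single_of_mem hu, funLeft_val_single_of_notMem hv,
    add_zero]

end Restriction

lemma eq_top_of_funLeft_rigidityRow_mem {V K : Type*} [DecidableEq V] [Field K] [Finite V]
    {t : V → K} (ht : Injective t) {T : Set V} {a b : V} (ha : a ∉ T) (hb : b ∉ T) (hab : a ≠ b)
    {W : Submodule K (T → K × K)}
    (hW : ∀ u ∈ T, ∀ v ∉ T,
      LinearMap.funLeft K (K × K) Subtype.val (rigidityRow (parabola ∘ t) s(u, v)) ∈ W) :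
    W = ⊤ := by
  have := Fintype.ofFinite T
  refine eq_top_of_forall_single_mem fun ⟨u, hu⟩ z => ?_
  have hspan := span_parabola_sub_eq_top (ht.ne (ne_of_mem_of_not_mem hu ha))
    (ht.ne (ne_of_mem_of_not_mem hu hb)) (ht.ne hab)
  suffices span K (Set.range ![parabola (t u) - parabola (t a), parabola (t u) - parabola (t b)])
      ≤ W.comap (LinearMap.single K (fun _ => K × K) ⟨u, hu⟩) from
    this (hspan ▸ mem_top)
  rw [span_le, Set.range_subset_iff, Fin.forall_fin_two]
  have hrow : ∀ v ∉ T, Pi.single ⟨u, hu⟩ (parabola (t u) - parabola (t v)) ∈ W := fun v hv =>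
    funLeft_rigidityRow_of_mem_of_notMem (K := K) (parabola ∘ t) hu hv ▸ hW u hu v hv
  exact ⟨hrow a ha, hrow b hb⟩

end K4Bootstrap

open K4Bootstrap Submodule

theorem spanned_from_clique_min_edges {R : Type*} [Fintype R] (S : Set R)
    (hS : 2 ≤ S.ncard) (G : Set (Sym2 R))
    (h : bootClosure (SimpleGraph.completeGraph (Fin 4))
        (G ∪ {e : Sym2 R | ¬ e.IsDiag ∧ ∀ v ∈ e, v ∈ S}) =
      (⊤ : SimpleGraph R).edgeSet) :
    2 * (Fintype.card R - S.ncard) ≤ {f ∈ G | ¬ ∀ v ∈ f, v ∈ S}.ncard := by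
  classical
  obtain ⟨a, b, ha, hb, hab⟩ := (Set.one_lt_ncard_iff S.toFinite).1 hS
  set t : R → ℝ := fun v => (Fintype.equivFin R v : ℕ)
  have ht : Function.Injective t :=
    Nat.cast_injective.comp (Fin.val_injective.comp (Fintype.equivFin R).injective)
  set ρ := LinearMap.funLeft ℝ (ℝ × ℝ) (Subtype.val : ↥Sᶜ → R)
  set W := span ℝ (ρ ∘ rigidityRow (parabola ∘ t) '' {f ∈ G | ¬ ∀ v ∈ f, v ∈ S})
  have hE : span ℝ (rigidityRow (parabola ∘ t) ''
      (G ∪ {e : Sym2 R | ¬ e.IsDiag ∧ ∀ v ∈ e, v ∈ S})) ≤ W.comap ρ := by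
    rw [span_le]
    rintro _ ⟨e, he, rfl⟩
    by_cases heS : ∀ v ∈ e, v ∈ S
    · induction e using Sym2.ind with
      | _ u v =>
        rw [SetLike.mem_coe, mem_comap, funLeft_rigidityRow_of_notMem _
          (Set.notMem_compl_iff.2 (heS u (Sym2.mem_mk_left u v)))
          (Set.notMem_compl_iff.2 (heS v (Sym2.mem_mk_right u v)))]
        exact zero_mem W
    · exact subset_span ⟨e, ⟨he.resolve_right fun h' => heS h'.2, heS⟩, rfl⟩
  have hW : W = ⊤ := by
    refine eq_top_of_funLeft_rigidityRow_mem ht (Set.notMem_compl_iff.2 ha)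
      (Set.notMem_compl_iff.2 hb) hab fun u hu v hv => hE ?_
    refine rigidityRow_mem_span_of_mem_bootClosure ht (h ▸ ?_)
    exact (SimpleGraph.top_adj u v).2 (ne_of_mem_of_not_mem hu hv)
  have hcard : Fintype.card ↥Sᶜ = Fintype.card R - S.ncard := by
    rw [Fintype.card_compl_set, Set.ncard_eq_toFinset_card', Set.toFinset_card]
  calc 2 * (Fintype.card R - S.ncard) = Module.finrank ℝ (↥Sᶜ → ℝ × ℝ) := by
        simp [Module.finrank_pi_fintype, hcard, mul_comm]
    _ = Module.finrank ℝ W := by rw [hW, finrank_top]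
    _ ≤ _ := finrank_span_image_le_ncard (Set.toFinite _) _
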